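/- arXiv:1703.09870 — 2 statements merged into one kernel-verified Lean document; each statement's English description precedes it below -/
import Mathlib

section
/- Let m, k ≥ 2 with k ≤ m ≤ 2k-2, and let C_1, ..., C_n (n ≥ m) be sets of the form I_i × J_i in ℝ × (ℝ/ℤ), with I_i a closed bounded interval and J_i a closed arc, such that among any m of them, some k share a common point. Then some point of the cylinder lies in at least (n - m + k + 1)/2 of the sets C_i. -/
open Classical

/-- A closed arc on the circle ℝ/ℤ: the image of a closed interval. -/
def Arc (a b : ℝ) : Set (AddCircle (1 : ℝ)) :=
  (fun t : ℝ => (t : AddCircle (1 : ℝ))) '' Set.Icc a b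

/-!
Project to the line first. Greedy colouring by left endpoints gives meeting intervals distinct
colours and uses no more colours than the number of intervals through some point. Since any `m`
voters contain `k` with distinct colours and `m ≤ 2k - 2`, the number of voters exceeds the number
of colours by at most `m - k`, so some `x` lies in at least `n - m + k` intervals.

The arcs of these voters are still `(k, m)`-agreeable, and some point lies in more than half of
them. Otherwise, by strong induction, the family `F` has even size and any two arcs `u`, `v` miss a
common point lying in exactly half of the arcs. For the longest arc `u`, take the first and the
last of these points after `u`: an arc containing both, but not the point chosen for it and `u`,
would be longer than `u`. So no arc contains both and `u` contains neither: the two points are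
covered fewer than `|F|` times in total, although each is covered `|F| / 2` times.
-/

open Finset

variable {ι X Y : Type*}

def IsAgreeable (k m : ℕ) (S : ι → Set X) (F : Finset ι) : Prop :=
  ∀ T ⊆ F, #T = m → ∃ K ⊆ T, #K = k ∧ (⋂ i ∈ K, S i).Nonempty

namespace IsAgreeable

variable {k m : ℕ} {S : ι → Set X} {F : Finset ι}

lemma mono (h : IsAgreeable k m S F) {F' : Finset ι} (hF' : F' ⊆ F) : IsAgreeable k m S F' :=
  fun T hT => h T (hT.trans hF')

lemma of_mapsTo (h : IsAgreeable k m S F) {S' : ι → Set Y} (f : X → Y)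
    (hf : ∀ i ∈ F, Set.MapsTo f (S i) (S' i)) : IsAgreeable k m S' F := by
  intro T hTF hT
  obtain ⟨K, hKT, hK, x, hx⟩ := h T hTF hT
  simp only [Set.mem_iInter] at hx
  exact ⟨K, hKT, hK, f x, Set.mem_iInter₂.2 fun i hi => hf i (hTF (hKT hi)) (hx i hi)⟩

lemma exists_le_card_filter (h : IsAgreeable k m S F) (hF : m ≤ #F) :
    ∃ x, k ≤ #{i ∈ F | x ∈ S i} := by
  obtain ⟨T, hTF, hT⟩ := exists_subset_card_eq hF
  obtain ⟨K, hKT, rfl, x, hx⟩ := h T hTF hT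
  simp only [Set.mem_iInter] at hx
  exact ⟨x, card_le_card fun i hi => mem_filter.2 ⟨hTF (hKT hi), hx i hi⟩⟩

lemma le_of_le_card (h : IsAgreeable k m S F) (hF : m ≤ #F) : k ≤ m := by
  obtain ⟨T, hTF, rfl⟩ := exists_subset_card_eq hF
  obtain ⟨K, hKT, rfl, -⟩ := h T hTF rfl
  exact card_le_card hKT

end IsAgreeable

theorem exists_subset_card_image_add_le {β : Type*} [DecidableEq β] (f : ι → β)
    {F : Finset ι} {w m : ℕ} (hw : w + #(F.image f) ≤ #F) (hwm : 2 * w ≤ m) (hm : m ≤ #F) :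
    ∃ T ⊆ F, #T = m ∧ #(T.image f) + w ≤ m := by
  obtain ⟨R, hRF, hRinj, hRimg⟩ :=
    exists_subset_injOn_image_eq_of_surjOn (F : Set ι) (F.image f) fun y hy => by simpa using hy
  have hR : #R = #(F.image f) := by rw [← hRimg, card_image_of_injOn hRinj]
  obtain ⟨E, hE, hEw⟩ := exists_subset_card_eq (s := F \ R) (n := w)
    (by rw [card_sdiff_of_subset (coe_subset.1 hRF)]; omega)
  -- `R` has one element per value of `f`, `E` has `w` elements outside `R`, and `U` holds the
  -- representatives of the values on `E`: so `E ∪ U` has `w + #U` elements but only `#U` values.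
  set U := {r ∈ R | f r ∈ E.image f}
  have hUimg : U.image f = E.image f := by
    refine (Finset.image_subset_iff.2 fun r hr => (mem_filter.1 hr).2).antisymm fun y hy => ?_
    have : y ∈ R.image f := hRimg ▸ image_subset_image (hE.trans sdiff_subset) hy
    obtain ⟨r, hr, rfl⟩ := mem_image.1 this
    exact mem_image_of_mem f (mem_filter.2 ⟨hr, hy⟩)
  have hU : #U = #(E.image f) := by
    rw [← hUimg, card_image_of_injOn (hRinj.mono (coe_subset.2 (filter_subset _ _)))]
  have hEU : #(E ∪ U) = w + #U := by
    rw [card_union_of_disjoint (disjoint_left.2 fun x hxE hxU =>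
      (mem_sdiff.1 (hE hxE)).2 (mem_filter.1 hxU).1), hEw]
  have hEUF : E ∪ U ⊆ F :=
    union_subset (hE.trans sdiff_subset) ((filter_subset _ _).trans (coe_subset.1 hRF))
  obtain ⟨T, hEUT, hTF, hT⟩ := exists_subsuperset_card_eq hEUF
    (by rw [hEU, hU]; have := card_image_le (s := E) (f := f); omega) hm
  refine ⟨T, hTF, hT, ?_⟩
  have hsplit : T.image f = E.image f ∪ (T \ (E ∪ U)).image f := by
    conv_lhs => rw [← union_sdiff_of_subset hEUT]
    rw [image_union, image_union, hUimg, union_self]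
  have := card_sdiff_of_subset hEUT
  have := card_le_card hEUT
  have := card_union_le (E.image f) ((T \ (E ∪ U)).image f)
  have := card_image_le (s := T \ (E ∪ U)) (f := f)
  rw [hsplit]
  omega

theorem card_add_le_card_image_add {β : Type*} [DecidableEq β] (f : ι → β)
    {F : Finset ι} {k m : ℕ} (hmk : m + 2 ≤ 2 * k) (hF : m ≤ #F)
    (h : ∀ T ⊆ F, #T = m → ∃ K ⊆ T, #K = k ∧ Set.InjOn f K) :
    #F + k ≤ #(F.image f) + m := by
  by_contra! hlt
  obtain ⟨T, hTF, hT, hTf⟩ := exists_subset_card_image_add_le f (w := m + 1 - k)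
    (by have := card_image_le (s := F) (f := f); omega) (by omega) hF
  obtain ⟨K, hKT, rfl, hinj⟩ := h T hTF hT
  have : #K ≤ #(T.image f) := by
    rw [← card_image_of_injOn hinj]; exact card_le_card (image_subset_image hKT)
  have := card_image_le (s := T) (f := f)
  omega

def IsColoring (S : ι → Set X) (F : Finset ι) (col : ι → ℕ) : Prop :=
  ∀ i ∈ F, ∀ j ∈ F, i ≠ j → (S i ∩ S j).Nonempty → col i ≠ col j

namespace IsColoring

variable {S : ι → Set X} {F : Finset ι} {col : ι → ℕ}

lemma injOn (h : IsColoring S F col) {K : Finset ι} (hKF : K ⊆ F)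
    (hK : (⋂ i ∈ K, S i).Nonempty) : Set.InjOn col K := by
  obtain ⟨x, hx⟩ := hK
  simp only [Set.mem_iInter] at hx
  intro i hi j hj hij
  by_contra hne
  exact h i (hKF hi) j (hKF hj) hne ⟨x, hx i hi, hx j hj⟩ hij

lemma insert_update (h : IsColoring S F col) {i : ι} (hi : i ∉ F) {c : ℕ}
    (hc : ∀ j ∈ F, (S i ∩ S j).Nonempty → col j ≠ c) :
    IsColoring S (insert i F) (Function.update col i c) := by
  have hF : ∀ j ∈ F, Function.update col i c j = col j := fun j hj =>
    Function.update_of_ne (ne_of_mem_of_not_mem hj hi) _ _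
  intro j hj j' hj' hne hmeet
  rcases mem_insert.1 hj with rfl | hjF <;> rcases mem_insert.1 hj' with rfl | hj'F
  · exact absurd rfl hne
  · rw [Function.update_self, hF j' hj'F]
    exact (hc j' hj'F hmeet).symm
  · rw [Function.update_self, hF j hjF]
    exact hc j hjF (Set.inter_comm _ _ ▸ hmeet)
  · rw [hF j hjF, hF j' hj'F]
    exact h j hjF j' hj'F hne hmeet

end IsColoring

lemma image_insert_update {β : Type*} [DecidableEq β] {F : Finset ι} {i : ι} (hi : i ∉ F)
    (f : ι → β) (c : β) :
    (insert i F).image (Function.update f i c) = insert c (F.image f) := by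
  rw [image_insert, Function.update_self]
  congr 1
  exact image_congr fun j hj => Function.update_of_ne (ne_of_mem_of_not_mem hj hi) _ _

section Intervals

variable {α : Type*} [LinearOrder α] (a b : ι → α)

lemma left_mem_Icc_inter_of_le {x y x' y' : α} (hx : x' ≤ x)
    (h : (Set.Icc x y ∩ Set.Icc x' y').Nonempty) : x ∈ Set.Icc x y ∩ Set.Icc x' y' := by
  obtain ⟨z, ⟨hxz, hzy⟩, -, hzy'⟩ := h
  exact ⟨⟨le_rfl, hxz.trans hzy⟩, hx, hxz.trans hzy'⟩

/-- The alternative `#(F.image col) ≤ 1` is needed for families of empty intervals. -/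
theorem exists_isColoring_Icc (F : Finset ι) :
    ∃ col, IsColoring (fun i => Set.Icc (a i) (b i)) F col ∧
      (#(F.image col) ≤ 1 ∨
        ∃ x, #(F.image col) ≤ #{i ∈ F | x ∈ Set.Icc (a i) (b i)}) := by
  induction F using Finset.induction_on_max_value a with
  | empty => exact ⟨0, fun i hi => absurd hi (notMem_empty i), Or.inl (by simp)⟩
  | insert i F hi hmax ih =>
    obtain ⟨col, hcol, hbound⟩ := ih
    set N := {j ∈ F | (Set.Icc (a i) (b i) ∩ Set.Icc (a j) (b j)).Nonempty}
    by_cases hsub : F.image col ⊆ N.image col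
    · obtain ⟨c, hc⟩ := Infinite.exists_notMem_finset (F.image col)
      refine ⟨Function.update col i c, hcol.insert_update hi fun j hj _ hjc =>
        hc (hjc ▸ mem_image_of_mem col hj), ?_⟩
      rw [image_insert_update hi, card_insert_of_notMem hc]
      obtain rfl | hF := F.eq_empty_or_nonempty
      · simp
      obtain ⟨j, hj⟩ := ((hF.image col).mono hsub).of_image
      have hN : ∀ j ∈ N, a i ∈ Set.Icc (a i) (b i) ∩ Set.Icc (a j) (b j) := fun j hj =>
        left_mem_Icc_inter_of_le (hmax j (mem_filter.1 hj).1) (mem_filter.1 hj).2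
      refine Or.inr ⟨a i, ?_⟩
      calc #(F.image col) + 1 ≤ #N + 1 := by gcongr; exact (card_le_card hsub).trans card_image_le
        _ = #(insert i N) := (card_insert_of_notMem fun hiN => hi (mem_filter.1 hiN).1).symm
        _ ≤ _ := card_le_card <|
          insert_subset (mem_filter.2 ⟨mem_insert_self i F, (hN j hj).1⟩) fun j' hj' =>
            mem_filter.2 ⟨mem_insert_of_mem (mem_filter.1 hj').1, (hN j' hj').2⟩
    · obtain ⟨c, hcF, hcN⟩ := not_subset.1 hsub
      refine ⟨Function.update col i c, hcol.insert_update hi fun j hj hmeet hjc =>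
        hcN (hjc ▸ mem_image_of_mem col (mem_filter.2 ⟨hj, hmeet⟩)), ?_⟩
      rw [image_insert_update hi, insert_eq_of_mem hcF]
      exact hbound.imp_right fun ⟨x, hx⟩ =>
        ⟨x, hx.trans (card_le_card (filter_subset_filter _ (subset_insert i F)))⟩

end Intervals

theorem IsAgreeable.exists_card_add_le_card_filter_Icc {α : Type*} [LinearOrder α]
    {a b : ι → α} {k m : ℕ} {F : Finset ι}
    (h : IsAgreeable k m (fun i => Set.Icc (a i) (b i)) F)
    (hmk : m + 2 ≤ 2 * k) (hF : m ≤ #F) :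
    ∃ x, #F + k ≤ #{i ∈ F | x ∈ Set.Icc (a i) (b i)} + m := by
  obtain ⟨col, hcol, hbound⟩ := exists_isColoring_Icc a b F
  have hcard := card_add_le_card_image_add col hmk hF fun T hTF hT => by
    obtain ⟨K, hKT, hK, hKS⟩ := h T hTF hT
    exact ⟨K, hKT, hK, hcol.injOn (hKT.trans hTF) hKS⟩
  have := h.le_of_le_card hF
  obtain hle | ⟨x, hx⟩ := hbound
  · omega
  · exact ⟨x, by omega⟩

lemma coe_mem_Arc_iff {c d x : ℝ} :
    (x : AddCircle (1 : ℝ)) ∈ Arc c d ↔ ∃ g : ℤ, x + g ∈ Set.Icc c d := by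
  simp only [Arc, Set.mem_image]
  constructor
  · rintro ⟨t, ht, hxt⟩
    have htx : ((t - x : ℝ) : AddCircle (1 : ℝ)) = 0 := by rw [AddCircle.coe_sub, hxt, sub_self]
    obtain ⟨g, hg⟩ := (AddCircle.coe_eq_zero_iff (1 : ℝ)).1 htx
    rw [zsmul_one] at hg
    exact ⟨g, by rwa [hg, add_sub_cancel]⟩
  · rintro ⟨g, hg⟩
    refine ⟨x + g, hg, ?_⟩
    rw [AddCircle.coe_add, add_eq_left, AddCircle.coe_eq_zero_iff 1]
    exact ⟨g, zsmul_one g⟩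

lemma lt_add_one_of_coe_notMem_Arc {c d x : ℝ} (hx : x ≤ d + 1)
    (hnot : (x : AddCircle (1 : ℝ)) ∉ Arc c d) : x < c + 1 := by
  by_contra! hcx
  exact hnot (coe_mem_Arc_iff.2 ⟨-1, by push_cast; constructor <;> linarith⟩)

/-- An arc through `x` and `y` that misses `r` in between must run from `y` on to `x + 1`. -/
lemma add_one_sub_le_of_coe_mem_Arc {c d x r y : ℝ} (hxr : x < r) (hry : r < y)
    (hx : (x : AddCircle (1 : ℝ)) ∈ Arc c d) (hy : (y : AddCircle (1 : ℝ)) ∈ Arc c d)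
    (hr : (r : AddCircle (1 : ℝ)) ∉ Arc c d) : x + 1 - y ≤ d - c := by
  obtain ⟨g, hgc, hgd⟩ := coe_mem_Arc_iff.1 hx
  obtain ⟨g', hg'c, hg'd⟩ := coe_mem_Arc_iff.1 hy
  have hrg' : r + g' < c := by
    by_contra! h
    exact hr (coe_mem_Arc_iff.2 ⟨g', h, by linarith⟩)
  have : g' < g := by exact_mod_cast (show (g' : ℝ) < g by linarith)
  have : (g' : ℝ) + 1 ≤ g := by exact_mod_cast this
  linarith

lemma exists_forall_notMem_Arc_or_notMem_Arc {c d : ι → ℝ} {F : Finset ι} {u : ι}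
    (hlong : ∀ v ∈ F, d v - c v ≤ d u - c u) (p : ι → AddCircle (1 : ℝ))
    (hp : ∀ v ∈ F, v ≠ u → p v ∉ Arc (c u) (d u) ∧ p v ∉ Arc (c v) (d v))
    (hF : (F.erase u).Nonempty) :
    ∃ v₁ ∈ F.erase u, ∃ v₂ ∈ F.erase u,
      ∀ w ∈ F, p v₁ ∉ Arc (c w) (d w) ∨ p v₂ ∉ Arc (c w) (d w) := by
  let t : ι → ℝ := fun v => AddCircle.equivIco 1 (d u) (p v)
  have ht : ∀ v, (t v : AddCircle (1 : ℝ)) = p v := fun v => AddCircle.coe_equivIco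
  have htI : ∀ v, t v ∈ Set.Ico (d u) (d u + 1) := fun v => (AddCircle.equivIco 1 (d u) (p v)).2
  obtain ⟨v₁, hv₁, hmin⟩ := (F.erase u).exists_min_image t hF
  obtain ⟨v₂, hv₂, hmax⟩ := (F.erase u).exists_max_image t hF
  refine ⟨v₁, hv₁, v₂, hv₂, fun w hw => not_and_or.1 fun ⟨h₁, h₂⟩ => ?_⟩
  have hwu : w ≠ u := by
    rintro rfl
    exact (hp v₁ (mem_of_mem_erase hv₁) (ne_of_mem_erase hv₁)).1 h₁
  have hw : w ∈ F.erase u := mem_erase.2 ⟨hwu, hw⟩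
  have hpw := (hp w (mem_of_mem_erase hw) hwu).2
  rw [← ht] at h₁ h₂ hpw
  have h₁w : t v₁ < t w := (hmin w hw).lt_of_ne fun e => hpw (e ▸ h₁)
  have hw₂ : t w < t v₂ := (hmax w hw).lt_of_ne fun e => hpw (e ▸ h₂)
  have hv₂u : t v₂ < c u + 1 := lt_add_one_of_coe_notMem_Arc (htI v₂).2.le
    ((ht v₂).symm ▸ (hp v₂ (mem_of_mem_erase hv₂) (ne_of_mem_erase hv₂)).1)
  -- `w` has to wrap around outside `[t v₁, t v₂] ⊆ [d u, c u + 1)`, so it is longer than `u`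
  linarith [add_one_sub_le_of_coe_mem_Arc h₁w hw₂ h₁ h₂ hpw, hlong w (mem_of_mem_erase hw),
    (htI v₁).1]

section Counting

variable {S : ι → Set X} {F : Finset ι}

lemma card_filter_lt_card_filter {F' : Finset ι} (hF' : F' ⊆ F) {u : ι} (hu : u ∈ F)
    (huF' : u ∉ F') {x : X} (hx : x ∈ S u) : #{i ∈ F' | x ∈ S i} < #{i ∈ F | x ∈ S i} :=
  card_lt_card <| (ssubset_iff_of_subset (filter_subset_filter _ hF')).2
    ⟨u, mem_filter.2 ⟨hu, hx⟩, fun h => huF' (mem_filter.1 h).1⟩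

lemma card_filter_add_card_filter_lt {x y : X} {u : ι} (hu : u ∈ F) (hx : x ∉ S u)
    (hy : y ∉ S u) (h : ∀ w ∈ F, x ∉ S w ∨ y ∉ S w) :
    #{w ∈ F | x ∈ S w} + #{w ∈ F | y ∈ S w} < #F := by
  rw [← card_union_of_disjoint (disjoint_filter.2 fun w hw hxw hyw =>
    (h w hw).elim (· hxw) (· hyw)), ← filter_or]
  exact card_lt_card (filter_ssubset.2 ⟨u, hu, by simp [hx, hy]⟩)

lemma notMem_and_two_mul_card_filter_eq (heven : Even #F)
    (hmax : ∀ x, 2 * #{i ∈ F | x ∈ S i} ≤ #F) {u v : ι} (hu : u ∈ F) (hv : v ∈ F)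
    (huv : u ≠ v) {x : X}
    (hx : #((F.erase u).erase v) < 2 * #{i ∈ (F.erase u).erase v | x ∈ S i}) :
    x ∉ S u ∧ x ∉ S v ∧ 2 * #{i ∈ F | x ∈ S i} = #F := by
  have hsub : (F.erase u).erase v ⊆ F := (erase_subset _ _).trans (erase_subset _ _)
  have hcard : #((F.erase u).erase v) + 1 + 1 = #F := by
    rw [card_erase_add_one (mem_erase.2 ⟨huv.symm, hv⟩), card_erase_add_one hu]
  have := card_le_card (filter_subset_filter (fun i => x ∈ S i) hsub)
  have := hmax x
  obtain ⟨r, hr⟩ := heven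
  refine ⟨fun hxu => ?_, fun hxv => ?_, by omega⟩
  · have := card_filter_lt_card_filter hsub hu
      (fun h => (mem_erase.1 (mem_of_mem_erase h)).1 rfl) hxu
    omega
  · have := card_filter_lt_card_filter hsub hv (fun h => (mem_erase.1 h).1 rfl) hxv
    omega

end Counting

theorem not_forall_exists_notMem_Arc_two_mul_card_eq {c d : ι → ℝ} {F : Finset ι}
    (hF : 2 ≤ #F) : ¬ ∀ u ∈ F, ∀ v ∈ F, u ≠ v → ∃ y, y ∉ Arc (c u) (d u) ∧
      y ∉ Arc (c v) (d v) ∧ 2 * #{i ∈ F | y ∈ Arc (c i) (d i)} = #F := by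
  intro hpair
  choose! p hp using hpair
  obtain ⟨u, hu, hlong⟩ := F.exists_max_image (fun i => d i - c i) (card_pos.1 (by omega))
  have hp' : ∀ v ∈ F.erase u, p u v ∉ Arc (c u) (d u) ∧ p u v ∉ Arc (c v) (d v) ∧
      2 * #{i ∈ F | p u v ∈ Arc (c i) (d i)} = #F := fun v hv =>
    hp u hu v (mem_of_mem_erase hv) (ne_of_mem_erase hv).symm
  obtain ⟨v₁, hv₁, v₂, hv₂, hsep⟩ := exists_forall_notMem_Arc_or_notMem_Arc hlong (p u)
    (fun v hv hvu => (hp' v (mem_erase.2 ⟨hvu, hv⟩)).imp_right And.left)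
    (card_pos.1 (by rw [card_erase_of_mem hu]; omega))
  have := card_filter_add_card_filter_lt hu (hp' v₁ hv₁).1 (hp' v₂ hv₂).1 hsep
  have := (hp' v₁ hv₁).2.2
  have := (hp' v₂ hv₂).2.2
  omega

theorem IsAgreeable.exists_lt_two_mul_card_filter_Arc {c d : ι → ℝ} {k m : ℕ}
    (hmk : m + 2 ≤ 2 * k) (F : Finset ι) (hF : m ≤ #F)
    (h : IsAgreeable k m (fun i => Arc (c i) (d i)) F) :
    ∃ y, #F < 2 * #{i ∈ F | y ∈ Arc (c i) (d i)} := by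
  induction F using Finset.strongInduction with
  | H F ih =>
  by_cases hsmall : #F < 2 * k
  · obtain ⟨y, hy⟩ := h.exists_le_card_filter hF
    exact ⟨y, by omega⟩
  by_contra! hmax
  have ih' : ∀ F' ⊂ F, #F ≤ #F' + 2 →
      ∃ y, #F' < 2 * #{i ∈ F' | y ∈ Arc (c i) (d i)} :=
    fun F' hF' hcard => ih F' hF' (by omega) (h.mono hF'.subset)
  rcases Nat.even_or_odd #F with heven | ⟨r, hr⟩
  · refine not_forall_exists_notMem_Arc_two_mul_card_eq (c := c) (d := d) (F := F) (by omega)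
      fun u hu v hv huv => ?_
    obtain ⟨y, hy⟩ := ih' ((F.erase u).erase v)
      ((erase_ssubset (mem_erase.2 ⟨huv.symm, hv⟩)).trans (erase_ssubset hu))
      (by rw [card_erase_of_mem (mem_erase.2 ⟨huv.symm, hv⟩), card_erase_of_mem hu]; omega)
    exact ⟨y, notMem_and_two_mul_card_filter_eq heven hmax hu hv huv hy⟩
  · obtain ⟨u, hu⟩ : F.Nonempty := card_pos.1 (by omega)
    obtain ⟨y, hy⟩ := ih' (F.erase u) (erase_ssubset hu) (by rw [card_erase_of_mem hu]; omega)
    have := card_le_card (filter_subset_filter (fun i => y ∈ Arc (c i) (d i)) (erase_subset u F))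
    have := card_erase_add_one hu
    have := hmax y
    omega

theorem agreeable_cylindrical_general (k m n : ℕ) (hk : 2 ≤ k)
    (hm2k : m ≤ 2 * k - 2) (hmn : m ≤ n) (a b c d : Fin n → ℝ)
    (h : ∀ T : Finset (Fin n), T.card = m → ∃ T' ⊆ T, T'.card = k ∧
      (⋂ i ∈ T', Set.Icc (a i) (b i) ×ˢ Arc (c i) (d i)).Nonempty) :
    ∃ z : ℝ × AddCircle (1 : ℝ), n - m + k + 1 ≤
      2 * (Finset.univ.filter fun i : Fin n =>
        z ∈ Set.Icc (a i) (b i) ×ˢ Arc (c i) (d i)).card := by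
  have hmk : m + 2 ≤ 2 * k := by omega
  have hcyl : IsAgreeable k m (fun i => Set.Icc (a i) (b i) ×ˢ Arc (c i) (d i)) univ :=
    fun T _ hT => h T hT
  have hn : m ≤ #(univ : Finset (Fin n)) := by simpa using hmn
  by_cases hsmall : n + 1 ≤ m + k
  · obtain ⟨z, hz⟩ := hcyl.exists_le_card_filter hn
    refine ⟨z, (show n - m + k + 1 ≤ 2 * k by omega).trans (Nat.mul_le_mul_left 2 ?_)⟩
    convert hz
  obtain ⟨x, hx⟩ := (hcyl.of_mapsTo Prod.fst fun _ _ => Set.mapsTo_fst_prod)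
    |>.exists_card_add_le_card_filter_Icc hmk hn
  rw [card_univ, Fintype.card_fin] at hx
  obtain ⟨y, hy⟩ :=
    (hcyl.mono (subset_univ _)).of_mapsTo Prod.snd (fun _ _ => Set.mapsTo_snd_prod)
    |>.exists_lt_two_mul_card_filter_Arc hmk {i | x ∈ Set.Icc (a i) (b i)} (by omega)
  refine ⟨(x, y), ?_⟩
  have : #{i ∈ {i | x ∈ Set.Icc (a i) (b i)} | y ∈ Arc (c i) (d i)} =
      #{i | (x, y) ∈ Set.Icc (a i) (b i) ×ˢ Arc (c i) (d i)} := by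
    rw [filter_filter]
    rfl
  omega

/-- Main cylindrical theorem: if `k ≤ m ≤ 2k-2` and among any `m` of `n ≥ m` approval sets
on the cylinder (interval × arc) some `k` share a point, then some point of the cylinder
lies in at least `(n - m + k + 1)/2` of the sets. -/
theorem agreeable_cylindrical (k m n : ℕ) (hk : 2 ≤ k) (hm : 2 ≤ m) (hkm : k ≤ m)
    (hm2k : m ≤ 2 * k - 2) (hmn : m ≤ n) (a b c d : Fin n → ℝ)
    (h : ∀ T : Finset (Fin n), T.card = m → ∃ T' ⊆ T, T'.card = k ∧
      (⋂ i ∈ T', Set.Icc (a i) (b i) ×ˢ Arc (c i) (d i)).Nonempty) :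
    ∃ z : ℝ × AddCircle (1 : ℝ), n - m + k + 1 ≤
      2 * (Finset.univ.filter fun i : Fin n =>
        z ∈ Set.Icc (a i) (b i) ×ˢ Arc (c i) (d i)).card :=
  agreeable_cylindrical_general k m n hk hm2k hmn a b c d h
end

section
/- Let m, k ≥ 2 with k ≤ m ≤ 2k-2, and let C_1, ..., C_n (n ≥ m) be sets of the form J_i × K_i on the torus (ℝ/ℤ)², where J_i and K_i are closed arcs, such that among any m of them, some k share a common point. Then some point of the torus lies in at least (n - m + k + 2)/4 of the sets C_i. -/
open Classical

open Finset

/-!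
Call two voters adjacent when their boxes meet. On the circle, the shortest of pairwise meeting
arcs has an endpoint in at least half of them, itself counted twice; applied in each coordinate,
a pairwise meeting family of `q ≥ 2` boxes has a point in at least `(q + 3) / 4` of them. So it
suffices to find a clique of size `n - m + k - 1` in the intersection graph. This goes by
induction on the vertex set: deleting a vertex lying in every maximum clique lowers the clique
number by one. If there is no such vertex, Hall's theorem and an exchange argument match a
maximum clique into its non-neighbours, and `m + 1 - k` of these non-adjacent pairs, completed
to `m` voters, leave no room for `k` pairwise adjacent ones because `m ≤ 2k - 2`.
-/

lemma coe_mem_arc_iff {a b t : ℝ} :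
    (t : AddCircle (1 : ℝ)) ∈ Arc a b ↔ ∃ z : ℤ, t + z ∈ Set.Icc a b := by
  constructor
  · rintro ⟨s, hs, hst⟩
    have hzero : ((s - t : ℝ) : AddCircle (1 : ℝ)) = 0 := by
      rw [AddCircle.coe_sub, ← hst, sub_self]
    obtain ⟨z, hz⟩ := (AddCircle.coe_eq_zero_iff 1).mp hzero
    refine ⟨z, ?_⟩
    rw [zsmul_one] at hz
    rwa [hz, add_sub_cancel]
  · rintro ⟨z, hz⟩
    exact ⟨t + z, hz, by simp⟩

lemma coe_mem_arc_of_mem_Icc {a b t : ℝ} (ht : t ∈ Set.Icc a b) :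
    (t : AddCircle (1 : ℝ)) ∈ Arc a b :=
  ⟨t, ht, rfl⟩

lemma endpoint_mem_arc_of_inter_nonempty {a b a' b' : ℝ} (hlen : b - a ≤ b' - a')
    (hmeet : (Arc a b ∩ Arc a' b').Nonempty) :
    (a : AddCircle (1 : ℝ)) ∈ Arc a' b' ∨ (b : AddCircle (1 : ℝ)) ∈ Arc a' b' := by
  obtain ⟨_, ⟨s, hs, rfl⟩, hs'⟩ := hmeet
  obtain ⟨z, hz⟩ := coe_mem_arc_iff.mp hs'
  simp only [coe_mem_arc_iff]
  by_cases ha : a' ≤ a + z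
  · exact Or.inl ⟨z, ha, by linarith [hs.1, hz.2]⟩
  · exact Or.inr ⟨z, by linarith [hs.2, hz.1], by linarith⟩

theorem exists_mem_arcs_of_pairwise_inter_nonempty {ι : Type*} {Q : Finset ι} (hQ : Q.Nonempty)
    {a b : ι → ℝ} (hab : ∀ i ∈ Q, a i ≤ b i)
    (hmeet : (Q : Set ι).Pairwise fun i j => (Arc (a i) (b i) ∩ Arc (a j) (b j)).Nonempty) :
    ∃ x : AddCircle (1 : ℝ), #Q + 1 ≤ 2 * #{i ∈ Q | x ∈ Arc (a i) (b i)} := by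
  obtain ⟨i₀, hi₀, hshortest⟩ := Q.exists_min_image (fun i => b i - a i) hQ
  set SA := {i ∈ Q | (a i₀ : AddCircle (1 : ℝ)) ∈ Arc (a i) (b i)}
  set SB := {i ∈ Q | (b i₀ : AddCircle (1 : ℝ)) ∈ Arc (a i) (b i)}
  have hcover : Q ⊆ SA ∪ SB := by
    intro j hj
    rcases eq_or_ne i₀ j with rfl | hne
    · simp [SA, hj, coe_mem_arc_of_mem_Icc (Set.left_mem_Icc.mpr (hab _ hj))]
    · have := endpoint_mem_arc_of_inter_nonempty (hshortest j hj) (hmeet hi₀ hj hne)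
      simpa [SA, SB, hj] using this
  have hi₀AB : i₀ ∈ SA ∩ SB := by
    simp [SA, SB, hi₀, coe_mem_arc_of_mem_Icc (Set.left_mem_Icc.mpr (hab _ hi₀)),
      coe_mem_arc_of_mem_Icc (Set.right_mem_Icc.mpr (hab _ hi₀))]
  have hsum : #Q + 1 ≤ #SA + #SB := by
    have := card_le_card hcover
    have := card_union_add_card_inter SA SB
    have := card_pos.mpr ⟨i₀, hi₀AB⟩
    omega
  rcases le_total #SA #SB with hle | hle
  · exact ⟨b i₀, show #Q + 1 ≤ 2 * #SB by omega⟩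
  · exact ⟨a i₀, show #Q + 1 ≤ 2 * #SA by omega⟩

lemma le_of_arc_nonempty {a b : ℝ} (h : (Arc a b).Nonempty) : a ≤ b :=
  Set.nonempty_Icc.mp (Set.image_nonempty.mp h)

theorem exists_mem_boxes_of_pairwise_inter_nonempty {ι : Type*} {Q : Finset ι} (hQ : 2 ≤ #Q)
    {a b c d : ι → ℝ}
    (hmeet : (Q : Set ι).Pairwise fun i j =>
      (Arc (a i) (b i) ×ˢ Arc (c i) (d i) ∩ Arc (a j) (b j) ×ˢ Arc (c j) (d j)).Nonempty) :
    ∃ z : AddCircle (1 : ℝ) × AddCircle (1 : ℝ),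
      #Q + 3 ≤ 4 * #{i ∈ Q | z ∈ Arc (a i) (b i) ×ˢ Arc (c i) (d i)} := by
  simp only [Set.prod_inter_prod, Set.prod_nonempty_iff] at hmeet
  have hne : ∀ i ∈ Q, a i ≤ b i ∧ c i ≤ d i := by
    intro i hi
    obtain ⟨j, hj, hji⟩ := Q.exists_mem_ne hQ i
    obtain ⟨hx, hy⟩ := hmeet hi hj hji.symm
    exact ⟨le_of_arc_nonempty (hx.mono Set.inter_subset_left),
      le_of_arc_nonempty (hy.mono Set.inter_subset_left)⟩
  obtain ⟨x, hx⟩ := exists_mem_arcs_of_pairwise_inter_nonempty (card_pos.mp (by omega))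
    (fun i hi => (hne i hi).1) (hmeet.imp fun _ _ h => h.1)
  set SA := {i ∈ Q | x ∈ Arc (a i) (b i)}
  obtain ⟨y, hy⟩ := exists_mem_arcs_of_pairwise_inter_nonempty (Q := SA)
    (card_pos.mp (by omega)) (fun i hi => (hne i (mem_filter.mp hi).1).2)
    ((hmeet.mono (coe_subset.mpr (filter_subset _ Q))).imp fun _ _ h => h.2)
  refine ⟨(x, y), ?_⟩
  have : {i ∈ SA | y ∈ Arc (c i) (d i)} ⊆
      {i ∈ Q | (x, y) ∈ Arc (a i) (b i) ×ˢ Arc (c i) (d i)} := fun i hi => by simp_all [SA]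
  have := card_le_card this
  omega

lemma exists_injOn_of_forall_card_le_card_biUnion {α : Type*} [DecidableEq α] {I : Finset α}
    {t : α → Finset α} (h : ∀ B ⊆ I, #B ≤ #(B.biUnion t)) :
    ∃ f : α → α, Set.InjOn f I ∧ ∀ x ∈ I, f x ∈ t x := by
  obtain ⟨g, hg, hgt⟩ := (all_card_le_biUnion_card_iff_exists_injective fun x : I => t x).mp
    fun s => by
      simpa [map_eq_image, image_biUnion, card_image_of_injective _ Subtype.val_injective] using
        h (s.map (Function.Embedding.subtype _)) (by simp +contextual [subset_iff])
  refine ⟨fun x => if hx : x ∈ I then g ⟨x, hx⟩ else x, fun x hx y hy hxy => ?_,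
    fun x hx => ?_⟩
  · simp only [mem_coe] at hx hy
    exact congrArg Subtype.val (hg (by simpa [hx, hy] using hxy))
  · simpa [hx] using hgt ⟨x, hx⟩

/-- `A` is a minimal violator of Hall's condition, so its deficiency is exactly one. -/
lemma exists_erase_image_eq_biUnion_of_card_biUnion_lt {α : Type*} [DecidableEq α]
    {I : Finset α} {t : α → Finset α} (h : ∃ B ⊆ I, #(B.biUnion t) < #B) :
    ∃ A ⊆ I, ∃ a ∈ A, ∃ f : α → α, Set.InjOn f (A.erase a) ∧
      (∀ x ∈ A.erase a, f x ∈ t x) ∧ (A.erase a).image f = A.biUnion t := by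
  obtain ⟨B, hBI, hB⟩ := h
  obtain ⟨A, hA, hAmin⟩ :=
    exists_min_image (I.powerset.filter fun A => #(A.biUnion t) < #A) card
      ⟨B, mem_filter.mpr ⟨mem_powerset.mpr hBI, hB⟩⟩
  obtain ⟨hAI, hAviol⟩ := mem_filter.mp hA
  obtain ⟨a, haA⟩ := card_pos.mp (Nat.zero_lt_of_lt hAviol)
  have hcard := card_erase_of_mem haA
  have hhall : ∀ B ⊆ A.erase a, #B ≤ #(B.biUnion t) := by
    intro B hB
    by_contra! hBviol
    have := hAmin B (mem_filter.mpr ⟨mem_powerset.mpr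
      ((hB.trans (erase_subset a A)).trans (mem_powerset.mp hAI)), hBviol⟩)
    have := card_le_card hB
    omega
  obtain ⟨f, hinj, hft⟩ := exists_injOn_of_forall_card_le_card_biUnion hhall
  have hsub : (A.erase a).image f ⊆ A.biUnion t := by
    intro y hy
    obtain ⟨x, hx, rfl⟩ := mem_image.mp hy
    exact mem_biUnion.mpr ⟨x, mem_of_mem_erase hx, hft x hx⟩
  refine ⟨A, mem_powerset.mp hAI, a, haA, f, hinj, hft, eq_of_subset_of_card_le hsub ?_⟩
  rw [card_image_of_injOn hinj]
  omega

namespace SimpleGraph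

variable {V : Type*} (G : SimpleGraph V)

noncomputable def cliqueNumOn (F : Finset V) : ℕ :=
  (F.powerset.filter fun C : Finset V => G.IsClique (C : Set V)).sup card

variable {G}

lemma card_le_cliqueNumOn {C F : Finset V} (hCF : C ⊆ F) (hC : G.IsClique (C : Set V)) :
    #C ≤ G.cliqueNumOn F :=
  le_sup (f := card) (mem_filter.mpr ⟨mem_powerset.mpr hCF, hC⟩)

lemma exists_isClique_card_eq_cliqueNumOn (F : Finset V) :
    ∃ C ⊆ F, G.IsClique (C : Set V) ∧ #C = G.cliqueNumOn F := by
  obtain ⟨C, hC, hCeq⟩ := exists_mem_eq_sup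
    (F.powerset.filter fun C : Finset V => G.IsClique (C : Set V)) ⟨∅, by simp⟩ card
  rw [mem_filter, mem_powerset] at hC
  exact ⟨C, hC.1, hC.2, hCeq.symm⟩

lemma le_cliqueNumOn_of_forall_exists_isClique {F : Finset V} {k m : ℕ} (hmF : m ≤ #F)
    (h : ∀ T ⊆ F, #T = m → ∃ C ⊆ T, #C = k ∧ G.IsClique (C : Set V)) :
    k ≤ G.cliqueNumOn F := by
  obtain ⟨T, hTF, hT⟩ := exists_subset_card_eq hmF
  obtain ⟨C, hCT, hCk, hC⟩ := h T hTF hT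
  exact hCk ▸ card_le_cliqueNumOn (hCT.trans hTF) hC

section Matching

variable [DecidableEq V]

/-- A clique meets each pair `{x, f x}` of a matching of `Gᶜ` at most once. -/
lemma IsClique.card_inter_union_image_le {C A : Finset V} {f : V → V}
    (hC : G.IsClique (C : Set V)) (hf : ∀ x ∈ A, Gᶜ.Adj x (f x)) :
    #(C ∩ (A ∪ A.image f)) ≤ #A := by
  have himage : C ∩ A.image f ⊆ (A \ C).image f := by
    intro y hy
    obtain ⟨hyC, hy⟩ := mem_inter.mp hy
    obtain ⟨x, hx, rfl⟩ := mem_image.mp hy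
    refine mem_image_of_mem f (mem_sdiff.mpr ⟨hx, fun hxC => ?_⟩)
    exact ((G.compl_adj _ _).mp (hf x hx)).2 (hC hxC hyC (hf x hx).ne)
  calc #(C ∩ (A ∪ A.image f)) ≤ #(C ∩ A) + #(C ∩ A.image f) := by
        rw [inter_union_distrib_left]
        exact card_union_le _ _
    _ ≤ #(C ∩ A) + #(A \ C) := by
        grw [card_le_card himage, card_image_le]
    _ = #A := by rw [inter_comm, card_inter_add_card_sdiff]

lemma IsClique.card_add_card_union_image_le {C A S : Finset V} {f : V → V}
    (hC : G.IsClique (C : Set V)) (hCS : C ⊆ S) (hAS : A ∪ A.image f ⊆ S)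
    (hf : ∀ x ∈ A, Gᶜ.Adj x (f x)) :
    #C + #(A ∪ A.image f) ≤ #S + #A := by
  have := hC.card_inter_union_image_le hf
  have := card_le_card (sdiff_subset_sdiff hCS (le_refl (A ∪ A.image f)))
  have := card_inter_add_card_sdiff C (A ∪ A.image f)
  have := card_sdiff_of_subset hAS
  have := card_le_card hAS
  omega

lemma card_add_le_of_forall_exists_isClique {F A : Finset V} {f : V → V} {k m : ℕ}
    (h : ∀ T ⊆ F, #T = m → ∃ C ⊆ T, #C = k ∧ G.IsClique (C : Set V))
    (hAF : A ∪ A.image f ⊆ F) (hinj : Set.InjOn f A) (hdisj : Disjoint A (A.image f))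
    (hf : ∀ x ∈ A, Gᶜ.Adj x (f x)) (hAm : 2 * #A ≤ m) (hmF : m ≤ #F) :
    #A + k ≤ m := by
  have hcard : #(A ∪ A.image f) = 2 * #A := by
    rw [card_union_of_disjoint hdisj, card_image_of_injOn hinj, two_mul]
  obtain ⟨S, hAS, hSF, hS⟩ := exists_subsuperset_card_eq hAF (hcard ▸ hAm) hmF
  obtain ⟨C, hCS, hCk, hC⟩ := h S hSF hS
  have := hC.card_add_card_union_image_le hCS hAS hf
  omega

lemma isClique_union_sdiff {I A J N : Finset V} (hI : G.IsClique (I : Set V)) (hAI : A ⊆ I)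
    (hJ : G.IsClique (J : Set V)) (hN : ∀ x ∈ A, ∀ y ∈ J \ I, Gᶜ.Adj x y → y ∈ N) :
    G.IsClique ((A ∪ (J \ N) : Finset V) : Set V) := by
  have hcross : ∀ x ∈ A, ∀ y ∈ J \ N, x ≠ y → G.Adj x y := by
    intro x hx y hy hxy
    obtain ⟨hyJ, hyN⟩ := mem_sdiff.mp hy
    by_cases hyI : y ∈ I
    · exact hI (hAI hx) hyI hxy
    · by_contra hadj
      exact hyN (hN x hx y (mem_sdiff.mpr ⟨hyJ, hyI⟩) ((G.compl_adj x y).mpr ⟨hxy, hadj⟩))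
  rw [coe_union]
  refine Set.pairwise_union.mpr ⟨hI.subset (coe_subset.mpr hAI),
    hJ.subset (coe_subset.mpr sdiff_subset), fun x hx y hy hxy => ?_⟩
  exact ⟨hcross x hx y hy hxy, (hcross x hx y hy hxy).symm⟩

/-- If no vertex of `F` lies in every maximum clique of `F`, then every clique `I ⊆ F` can be
matched in `Gᶜ` into `F \ I`. -/
theorem exists_injOn_compl_adj_of_forall_cliqueNumOn_le_erase {F I : Finset V} (hIF : I ⊆ F)
    (hI : G.IsClique (I : Set V))
    (hstable : ∀ v ∈ F, G.cliqueNumOn F ≤ G.cliqueNumOn (F.erase v)) :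
    ∃ f : V → V, Set.InjOn f I ∧ ∀ x ∈ I, f x ∈ F \ I ∧ Gᶜ.Adj x (f x) := by
  classical
  set N : V → Finset V := fun x => (F \ I).filter (Gᶜ.Adj x)
  suffices hall : ∀ B ⊆ I, #B ≤ #(B.biUnion N) by
    obtain ⟨f, hinj, hf⟩ := exists_injOn_of_forall_card_le_card_biUnion hall
    exact ⟨f, hinj, fun x hx => mem_filter.mp (hf x hx)⟩
  by_contra! hviol
  obtain ⟨A, hAI, a, haA, f, hinj, hfN, himage⟩ :=
    exists_erase_image_eq_biUnion_of_card_biUnion_lt hviol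
  -- a maximum clique `J` avoiding `a` swaps its part in `A ∪ N(A)` for `A`, gaining a vertex
  obtain ⟨J, hJF, hJ, hJcard⟩ := G.exists_isClique_card_eq_cliqueNumOn (F.erase a)
  set U := A ∪ A.biUnion N
  have hK : G.IsClique ((A ∪ (J \ U) : Finset V) : Set V) :=
    isClique_union_sdiff hI hAI hJ fun x hx y hy hxy => mem_union_right _ <|
      mem_biUnion.mpr ⟨x, hx, mem_filter.mpr ⟨sdiff_subset_sdiff (hJF.trans (erase_subset a F))
        (le_refl I) hy, hxy⟩⟩
  have hKF : A ∪ (J \ U) ⊆ F :=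
    union_subset (hAI.trans hIF) (sdiff_subset.trans (hJF.trans (erase_subset a F)))
  have hJU : #(J ∩ U) ≤ #(A.erase a) := by
    refine le_trans (card_le_card fun y hy => ?_) (hJ.card_inter_union_image_le
      fun x hx => (mem_filter.mp (hfN x hx)).2)
    have hya : y ≠ a := ne_of_mem_erase (hJF (mem_inter.mp hy).1)
    simp only [U, ← himage, mem_inter, mem_union, mem_erase] at hy ⊢
    tauto
  have := card_union_of_disjoint (disjoint_sdiff.mono_left subset_union_left : Disjoint A (J \ U))
  have := card_inter_add_card_sdiff J U
  have := card_erase_of_mem haA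
  have := card_pos.mpr ⟨a, haA⟩
  have := card_le_cliqueNumOn hKF hK
  have := hstable a (hIF (hAI haA))
  omega

end Matching

theorem card_add_le_cliqueNumOn_add {F : Finset V} {k m : ℕ} (hmk : m + 2 ≤ 2 * k)
    (hmF : m ≤ #F) (h : ∀ T ⊆ F, #T = m → ∃ C ⊆ T, #C = k ∧ G.IsClique (C : Set V)) :
    #F + k ≤ G.cliqueNumOn F + m + 1 := by
  classical
  induction F using Finset.strongInduction with
  | H F ih =>
  have hk := le_cliqueNumOn_of_forall_exists_isClique hmF h
  rcases hmF.eq_or_lt with hFm | hFm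
  · omega
  by_cases hdrop : ∃ v ∈ F, G.cliqueNumOn (F.erase v) < G.cliqueNumOn F
  · obtain ⟨v, hv, hlt⟩ := hdrop
    have hcard := card_erase_of_mem hv
    have := ih (F.erase v) (erase_ssubset hv) (by omega)
      fun T hT => h T (hT.trans (erase_subset v F))
    omega
  push Not at hdrop
  obtain ⟨I, hIF, hI, hIcard⟩ := G.exists_isClique_card_eq_cliqueNumOn F
  obtain ⟨f, hinj, hf⟩ := exists_injOn_compl_adj_of_forall_cliqueNumOn_le_erase hIF hI hdrop
  obtain ⟨A, hAI, hAcard⟩ := exists_subset_card_eq (s := I) (n := m + 1 - k) (by omega)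
  have hAF : A ∪ A.image f ⊆ F := union_subset (hAI.trans hIF) <|
    image_subset_iff.mpr fun x hx => (mem_sdiff.mp (hf x (hAI hx)).1).1
  have hdisj : Disjoint A (A.image f) := disjoint_right.mpr fun y hy hyA => by
    obtain ⟨x, hx, rfl⟩ := mem_image.mp hy
    exact (mem_sdiff.mp (hf x (hAI hx)).1).2 (hAI hyA)
  have := card_add_le_of_forall_exists_isClique h hAF (hinj.mono (coe_subset.mpr hAI)) hdisj
    (fun x hx => (hf x (hAI hx)).2) (by omega) hmF
  omega

end SimpleGraph

@[simps]
def intersectionGraph {ι α : Type*} (s : ι → Set α) : SimpleGraph ι where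
  Adj i j := i ≠ j ∧ (s i ∩ s j).Nonempty
  symm := ⟨fun _ _ h => ⟨h.1.symm, Set.inter_comm (s _) (s _) ▸ h.2⟩⟩
  loopless := ⟨fun _ h => h.1 rfl⟩

lemma isClique_intersectionGraph_of_biInter_nonempty {ι α : Type*} {s : ι → Set α}
    {T : Finset ι} (h : (⋂ i ∈ T, s i).Nonempty) :
    (intersectionGraph s).IsClique (T : Set ι) := by
  obtain ⟨z, hz⟩ := h
  rw [Set.mem_iInter₂] at hz
  exact fun i hi j hj hij => intersectionGraph_adj s i j |>.mpr ⟨hij, z, hz i hi, hz j hj⟩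

theorem agreeable_toroidal_general (k m n : ℕ) (hk : 2 ≤ k)
    (hm2k : m ≤ 2 * k - 2) (hmn : m ≤ n) (a b c d : Fin n → ℝ)
    (h : ∀ T : Finset (Fin n), T.card = m → ∃ T' ⊆ T, T'.card = k ∧
      (⋂ i ∈ T', Arc (a i) (b i) ×ˢ Arc (c i) (d i)).Nonempty) :
    ∃ z : AddCircle (1 : ℝ) × AddCircle (1 : ℝ), n - m + k + 2 ≤
      4 * (Finset.univ.filter fun i : Fin n =>
        z ∈ Arc (a i) (b i) ×ˢ Arc (c i) (d i)).card := by
  set G := intersectionGraph fun i : Fin n => Arc (a i) (b i) ×ˢ Arc (c i) (d i)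
  have hcliques : ∀ T ⊆ (univ : Finset (Fin n)), #T = m →
      ∃ C ⊆ T, #C = k ∧ G.IsClique (C : Set (Fin n)) := fun T _ hT => by
    obtain ⟨C, hCT, hCk, hC⟩ := h T hT
    exact ⟨C, hCT, hCk, isClique_intersectionGraph_of_biInter_nonempty hC⟩
  have hmn' : m ≤ #(univ : Finset (Fin n)) := by simpa using hmn
  have hω := G.card_add_le_cliqueNumOn_add (by omega) hmn' hcliques
  have hkω := G.le_cliqueNumOn_of_forall_exists_isClique hmn' hcliques
  obtain ⟨Q, -, hQ, hQcard⟩ := G.exists_isClique_card_eq_cliqueNumOn univ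
  obtain ⟨z, hz⟩ := exists_mem_boxes_of_pairwise_inter_nonempty (by omega : 2 ≤ #Q)
    (hQ.imp fun i j hij => (intersectionGraph_adj _ i j).mp hij |>.2)
  refine ⟨z, ?_⟩
  have := card_le_card (filter_subset_filter
    (fun i : Fin n => z ∈ Arc (a i) (b i) ×ˢ Arc (c i) (d i)) (subset_univ Q))
  rw [card_univ, Fintype.card_fin] at hω
  omega

/-- Main toroidal theorem: if `k ≤ m ≤ 2k-2` and among any `m` of `n ≥ m` approval sets
on the torus (arc × arc) some `k` share a point, then some point of the torus lies in at
least `(n - m + k + 2)/4` of the sets. -/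
theorem agreeable_toroidal (k m n : ℕ) (hk : 2 ≤ k) (hm : 2 ≤ m) (hkm : k ≤ m)
    (hm2k : m ≤ 2 * k - 2) (hmn : m ≤ n) (a b c d : Fin n → ℝ)
    (h : ∀ T : Finset (Fin n), T.card = m → ∃ T' ⊆ T, T'.card = k ∧
      (⋂ i ∈ T', Arc (a i) (b i) ×ˢ Arc (c i) (d i)).Nonempty) :
    ∃ z : AddCircle (1 : ℝ) × AddCircle (1 : ℝ), n - m + k + 2 ≤
      4 * (Finset.univ.filter fun i : Fin n =>
        z ∈ Arc (a i) (b i) ×ˢ Arc (c i) (d i)).card :=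
  agreeable_toroidal_general k m n hk hm2k hmn a b c d h
end
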